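/- arXiv:2311.17542 — 4 statements merged into one kernel-verified Lean document; each statement's English description precedes it below -/
import Mathlib

section
/- Let M > 0 and let θ₁, θ₂ : ℝ → ℝ be continuously differentiable functions with |θ_i(x)| ≤ M for all x ∈ [0,1] and i = 1,2. Then (∫₀¹ |e^{θ₁(x)} − e^{θ₂(x)}|² dx)^{1/2} + (∫₀¹ |e^{θ₁(x)}θ₁′(x) − e^{θ₂(x)}θ₂′(x)|² dx)^{1/2} ≤ e^M (1 + (∫₀¹ |θ₁′(x)|² dx)^{1/2}) ( sup_{x∈[0,1]} |θ₁(x) − θ₂(x)| + (∫₀¹ |θ₁′(x) − θ₂′(x)|² dx)^{1/2} ). -/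
/-!
Work in the real `L²` norm `lpNorm · 2` on `[0, 1]`. With `S` the uniform distance of `θ₁`
and `θ₂`, the mean value theorem gives `|e^{θ₁} - e^{θ₂}| ≤ e^M S` pointwise, and the splitting
`e^{θ₁} θ₁' - e^{θ₂} θ₂' = e^{θ₂} (θ₁' - θ₂') + (e^{θ₁} - e^{θ₂}) θ₁'` bounds the derivative
difference by `e^M |θ₁' - θ₂'| + e^M S |θ₁'|`. Minkowski's inequality turns these into
`e^M S + e^M (‖θ₁' - θ₂'‖ + S ‖θ₁'‖)`, which is at most `e^M (1 + ‖θ₁'‖) (S + ‖θ₁' - θ₂'‖)`.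
-/

open MeasureTheory Set

theorem Real.abs_exp_sub_exp_le_of_le {x y M : ℝ} (hx : x ≤ M) (hy : y ≤ M) :
    |Real.exp x - Real.exp y| ≤ Real.exp M * |x - y| := by
  simpa only [Real.norm_eq_abs] using (convex_Iic M).norm_image_sub_le_of_norm_deriv_le
    (fun _ _ => Real.differentiableAt_exp)
    (fun z hz => by simpa [abs_of_pos (Real.exp_pos z)] using Real.exp_le_exp.2 hz) hy hx

theorem Real.abs_exp_mul_sub_exp_mul_le {x y u v M S : ℝ} (hx : x ≤ M) (hy : y ≤ M)
    (hS : |x - y| ≤ S) :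
    |Real.exp x * u - Real.exp y * v| ≤ |Real.exp M * (u - v)| + |Real.exp M * S * u| := by
  have hS₀ : 0 ≤ S := (abs_nonneg _).trans hS
  calc |Real.exp x * u - Real.exp y * v|
      = |Real.exp y * (u - v) + (Real.exp x - Real.exp y) * u| := by ring_nf
    _ ≤ |Real.exp y| * |u - v| + |Real.exp x - Real.exp y| * |u| :=
        (abs_add_le _ _).trans_eq (by rw [abs_mul, abs_mul])
    _ ≤ Real.exp M * |u - v| + Real.exp M * S * |u| := by
        rw [abs_of_pos (Real.exp_pos y)]
        gcongr
        exact (Real.abs_exp_sub_exp_le_of_le hx hy).trans (by gcongr)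
    _ = |Real.exp M * (u - v)| + |Real.exp M * S * u| := by
        rw [abs_mul, abs_mul, abs_mul, abs_of_pos (Real.exp_pos M), abs_of_nonneg hS₀]

theorem le_ciSup₂_of_bddAbove_image {α β : Type*} [ConditionallyCompleteLattice α] {f : β → α}
    {s : Set β} (hf : BddAbove (f '' s)) {x : β} (hx : x ∈ s) : f x ≤ ⨆ y ∈ s, f y :=
  le_ciSup₂ (f := fun y (_ : y ∈ s) => f y)
    (hf.mono (iUnion_subset fun _ => range_subset_iff.2 fun hy => mem_image_of_mem f hy)) x hx

theorem ContinuousOn.memLp_restrict_of_isCompact {X E : Type*} [TopologicalSpace X]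
    [MeasurableSpace X] [OpensMeasurableSpace X] [T2Space X] [NormedAddCommGroup E]
    {μ : Measure X} [IsFiniteMeasureOnCompacts μ] {s : Set X} {f : X → E}
    (hs : IsCompact s) (hf : ContinuousOn f s) (p : ENNReal) : MemLp f p (μ.restrict s) := by
  have : IsFiniteMeasure (μ.restrict s) := isFiniteMeasure_restrict.2 hs.measure_lt_top.ne
  obtain ⟨C, hC⟩ := hs.exists_bound_of_continuousOn hf
  exact .of_bound (hf.aestronglyMeasurable_of_isCompact hs hs.measurableSet) C
    (ae_restrict_of_forall_mem hs.measurableSet hC)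

namespace MeasureTheory

variable {α E : Type*} {m : MeasurableSpace α} {μ : Measure α} {p : ENNReal}
  [NormedAddCommGroup E]

theorem sqrt_integral_sq_eq_lpNorm {f : α → ℝ} (hf : AEStronglyMeasurable f μ) :
    √(∫ x, |f x| ^ 2 ∂μ) = lpNorm f 2 μ := by
  rw [show (2 : ENNReal) = ((2 : NNReal) : ENNReal) from rfl,
    lpNorm_nnreal_eq_integral_norm_rpow two_ne_zero hf, Real.sqrt_eq_rpow]
  norm_num

theorem lpNorm_mono_ae_real {f : α → E} {g : α → ℝ} (hg : MemLp g p μ)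
    (h : ∀ᵐ x ∂μ, ‖f x‖ ≤ g x) : lpNorm f p μ ≤ lpNorm g p μ := by
  by_cases hf : AEStronglyMeasurable f μ
  · rw [← toReal_eLpNorm hf, ← toReal_eLpNorm hg.aestronglyMeasurable]
    exact ENNReal.toReal_mono hg.eLpNorm_ne_top (eLpNorm_mono_ae_real h)
  · simp [hf]

theorem lpNorm_le_of_ae_norm_le [IsFiniteMeasure μ] {f : α → E} {C : ℝ} (hp : p ≠ 0)
    (hp' : p ≠ ⊤) (hC : 0 ≤ C) (h : ∀ᵐ x ∂μ, ‖f x‖ ≤ C) :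
    lpNorm f p μ ≤ C * μ.real univ ^ p.toReal⁻¹ := by
  have := lpNorm_mono_ae_real (memLp_const C (p := p)) h
  rwa [lpNorm_const' hp hp', Real.norm_of_nonneg hC] at this

theorem lpNorm_le_of_ae_norm_le_add {f g k : α → E} (hf : MemLp f p μ) (hg : MemLp g p μ)
    (hp : 1 ≤ p) (h : ∀ᵐ x ∂μ, ‖k x‖ ≤ ‖f x‖ + ‖g x‖) :
    lpNorm k p μ ≤ lpNorm f p μ + lpNorm g p μ :=
  calc lpNorm k p μ ≤ lpNorm (fun x => ‖f x‖ + ‖g x‖) p μ :=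
        lpNorm_mono_ae_real (hf.norm.add hg.norm) h
    _ ≤ lpNorm (fun x => ‖f x‖) p μ + lpNorm (fun x => ‖g x‖) p μ := lpNorm_add_le hf.norm hp
    _ = lpNorm f p μ + lpNorm g p μ := by
        rw [lpNorm_norm hf.aestronglyMeasurable, lpNorm_norm hg.aestronglyMeasurable]

theorem lpNorm_fun_const_mul {f : α → ℝ} (c : ℝ) :
    lpNorm (fun x => c * f x) p μ = |c| * lpNorm f p μ := by
  change lpNorm (c • f) p μ = _
  rw [lpNorm_const_smul]
  simp

end MeasureTheory

theorem sqrt_intervalIntegral_sq_eq_lpNorm {a b : ℝ} (hab : a ≤ b) {f : ℝ → ℝ}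
    (hf : AEStronglyMeasurable f (volume.restrict (Icc a b))) :
    √(∫ x in a..b, |f x| ^ 2) = lpNorm f 2 (volume.restrict (Icc a b)) := by
  rw [intervalIntegral.integral_of_le hab, ← integral_Icc_eq_integral_Ioc,
    sqrt_integral_sq_eq_lpNorm hf]

theorem stmt_11_general (M : ℝ) (θ₁ θ₂ : ℝ → ℝ)
    (h₁ : ContDiff ℝ 1 θ₁) (h₂ : ContDiff ℝ 1 θ₂)
    (hb₁ : ∀ x ∈ Set.Icc (0 : ℝ) 1, |θ₁ x| ≤ M)
    (hb₂ : ∀ x ∈ Set.Icc (0 : ℝ) 1, |θ₂ x| ≤ M) :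
    Real.sqrt (∫ x in (0 : ℝ)..1, |Real.exp (θ₁ x) - Real.exp (θ₂ x)| ^ 2) +
      Real.sqrt (∫ x in (0 : ℝ)..1,
        |Real.exp (θ₁ x) * deriv θ₁ x - Real.exp (θ₂ x) * deriv θ₂ x| ^ 2) ≤
    Real.exp M * (1 + Real.sqrt (∫ x in (0 : ℝ)..1, |deriv θ₁ x| ^ 2)) *
      ((⨆ x ∈ Set.Icc (0 : ℝ) 1, |θ₁ x - θ₂ x|) +
        Real.sqrt (∫ x in (0 : ℝ)..1, |deriv θ₁ x - deriv θ₂ x| ^ 2)) := by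
  set μ := volume.restrict (Icc (0 : ℝ) 1)
  set S := ⨆ x ∈ Icc (0 : ℝ) 1, |θ₁ x - θ₂ x|
  have hc₁ := h₁.continuous
  have hc₂ := h₂.continuous
  have hd₁ := h₁.continuous_deriv le_rfl
  have hd₂ := h₂.continuous_deriv le_rfl
  have hS : ∀ x ∈ Icc (0 : ℝ) 1, |θ₁ x - θ₂ x| ≤ S := fun x hx =>
    le_ciSup₂_of_bddAbove_image (f := fun x => |θ₁ x - θ₂ x|)
      (isCompact_Icc.bddAbove_image (by fun_prop)) hx
  have hS₀ : 0 ≤ S := (abs_nonneg _).trans (hS 0 (left_mem_Icc.2 zero_le_one))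
  have hupper {θ : ℝ → ℝ} (hb : ∀ x ∈ Icc (0 : ℝ) 1, |θ x| ≤ M) x (hx : x ∈ Icc (0 : ℝ) 1) :
      θ x ≤ M := (abs_le.1 (hb x hx)).2
  simp (disch := fun_prop) only [sqrt_intervalIntegral_sq_eq_lpNorm zero_le_one]
  have hvalue : lpNorm (fun x => Real.exp (θ₁ x) - Real.exp (θ₂ x)) 2 μ ≤ Real.exp M * S := by
    refine (lpNorm_le_of_ae_norm_le two_ne_zero ENNReal.ofNat_ne_top (by positivity)
      (ae_restrict_of_forall_mem measurableSet_Icc fun x hx =>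
        (Real.abs_exp_sub_exp_le_of_le (hupper hb₁ x hx) (hupper hb₂ x hx)).trans
          (mul_le_mul_of_nonneg_left (hS x hx) (Real.exp_pos M).le))).trans_eq ?_
    simp
  have hderiv : lpNorm (fun x => Real.exp (θ₁ x) * deriv θ₁ x - Real.exp (θ₂ x) * deriv θ₂ x)
      2 μ ≤ Real.exp M * lpNorm (fun x => deriv θ₁ x - deriv θ₂ x) 2 μ +
        Real.exp M * S * lpNorm (deriv θ₁) 2 μ := by
    refine (lpNorm_le_of_ae_norm_le_add (f := fun x => Real.exp M * (deriv θ₁ x - deriv θ₂ x))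
      (g := fun x => Real.exp M * S * deriv θ₁ x)
      ((Continuous.continuousOn (by fun_prop)).memLp_restrict_of_isCompact isCompact_Icc 2)
      ((Continuous.continuousOn (by fun_prop)).memLp_restrict_of_isCompact isCompact_Icc 2)
      one_le_two
      (ae_restrict_of_forall_mem measurableSet_Icc fun x hx =>
        Real.abs_exp_mul_sub_exp_mul_le (hupper hb₁ x hx) (hupper hb₂ x hx) (hS x hx))).trans_eq ?_
    rw [lpNorm_fun_const_mul, lpNorm_fun_const_mul, abs_of_pos (Real.exp_pos M),
      abs_of_nonneg (by positivity)]
  have hA : 0 ≤ lpNorm (deriv θ₁) 2 μ := lpNorm_nonneg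
  have hD : 0 ≤ lpNorm (fun x => deriv θ₁ x - deriv θ₂ x) 2 μ := lpNorm_nonneg
  nlinarith [mul_nonneg (Real.exp_pos M).le (mul_nonneg hA hD)]

/-- Local Lipschitz estimate for `θ ↦ e^θ` in the `H¹`-type norm on `[0,1]`: for `C¹`
functions `θ₁, θ₂` bounded by `M` on `[0,1]`,
`‖e^{θ₁}-e^{θ₂}‖_{L²} + ‖(e^{θ₁})'-(e^{θ₂})'‖_{L²}
  ≤ e^M (1+‖θ₁'‖_{L²})(‖θ₁-θ₂‖_∞ + ‖θ₁'-θ₂'‖_{L²})`. -/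
theorem stmt_11 (M : ℝ) (hM : 0 < M) (θ₁ θ₂ : ℝ → ℝ)
    (h₁ : ContDiff ℝ 1 θ₁) (h₂ : ContDiff ℝ 1 θ₂)
    (hb₁ : ∀ x ∈ Set.Icc (0 : ℝ) 1, |θ₁ x| ≤ M)
    (hb₂ : ∀ x ∈ Set.Icc (0 : ℝ) 1, |θ₂ x| ≤ M) :
    Real.sqrt (∫ x in (0 : ℝ)..1, |Real.exp (θ₁ x) - Real.exp (θ₂ x)| ^ 2) +
      Real.sqrt (∫ x in (0 : ℝ)..1,
        |Real.exp (θ₁ x) * deriv θ₁ x - Real.exp (θ₂ x) * deriv θ₂ x| ^ 2) ≤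
    Real.exp M * (1 + Real.sqrt (∫ x in (0 : ℝ)..1, |deriv θ₁ x| ^ 2)) *
      ((⨆ x ∈ Set.Icc (0 : ℝ) 1, |θ₁ x - θ₂ x|) +
        Real.sqrt (∫ x in (0 : ℝ)..1, |deriv θ₁ x - deriv θ₂ x| ^ 2)) :=
  stmt_11_general M θ₁ θ₂ h₁ h₂ hb₁ hb₂
end

section
/- Let r > 0 and M₀ > 0. Let (f_k)_{k∈ℤ} be real numbers with Σ_{k∈ℤ} f_k² e^{r k²} ≤ M₀², and define f : ℝ → ℝ by f(x) = f₀/√(2π) + (1/√π) Σ_{k≥1} ( f_k cos(kx) + f_{-k} sin(kx) ). Then there exists a constant M > 0 depending only on r and M₀ such that f is smooth, sup_{x∈ℝ} |f(x)| ≤ M, and for every n ∈ ℕ and every x ∈ ℝ, the n-th derivative of the function x ↦ e^{f(x)} satisfies |(d/dx)^n e^{f(x)}| ≤ M · n! · M^n. -/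
/-- The 2π-periodic function with real trigonometric coefficients `fc : ℤ → ℝ`:
`f(x) = fc 0/√(2π) + (1/√π) ∑_{k≥1} (fc k · cos(kx) + fc (-k) · sin(kx))`. -/
noncomputable def trigSeries (fc : ℤ → ℝ) (x : ℝ) : ℝ :=
  fc 0 / Real.sqrt (2 * Real.pi) +
    (1 / Real.sqrt Real.pi) *
      ∑' k : ℕ, (fc ((k : ℤ) + 1) * Real.cos (((k : ℝ) + 1) * x) +
        fc (-((k : ℤ) + 1)) * Real.sin (((k : ℝ) + 1) * x))

/-!
The weighted bound gives `|f_k| ≤ M₀ e^{-r k²/2}`, and since `|cos(kz)|, |sin(kz)| ≤ e^{k |Im z|}`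
this Gaussian decay makes the series converge uniformly on every horizontal strip once `x` is
replaced by `z ∈ ℂ`. Hence `f` is the restriction of an entire function `F`, bounded on the strip
`|Im z| ≤ 1` by a constant `B` depending only on `r` and `M₀`. Cauchy's estimate for `exp ∘ F` on
the unit discs centred on the real axis gives `|∂ⁿ e^f| ≤ n! e^B`, so `M = B + e^B` works.
-/

open Complex

namespace Complex

lemma norm_exp_mul_I_le_exp_abs_im (z : ℂ) : ‖exp (z * I)‖ ≤ Real.exp |z.im| := by
  rw [norm_exp]
  simpa using Real.exp_le_exp.2 (neg_le_abs z.im)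

lemma norm_cos_le_exp_abs_im (z : ℂ) : ‖cos z‖ ≤ Real.exp |z.im| := by
  have h := norm_exp_mul_I_le_exp_abs_im (-z)
  rw [neg_im, abs_neg] at h
  calc ‖cos z‖ = ‖exp (z * I) + exp (-z * I)‖ / 2 := by simp [cos]
    _ ≤ (Real.exp |z.im| + Real.exp |z.im|) / 2 := by
      gcongr
      exact (norm_add_le _ _).trans (add_le_add (norm_exp_mul_I_le_exp_abs_im z) h)
    _ = Real.exp |z.im| := by ring

lemma norm_sin_le_exp_abs_im (z : ℂ) : ‖sin z‖ ≤ Real.exp |z.im| := by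
  have h := norm_exp_mul_I_le_exp_abs_im (-z)
  rw [neg_im, abs_neg] at h
  calc ‖sin z‖ = ‖exp (-z * I) - exp (z * I)‖ / 2 := by simp [sin]
    _ ≤ (Real.exp |z.im| + Real.exp |z.im|) / 2 := by
      gcongr
      exact (norm_sub_le _ _).trans (add_le_add h (norm_exp_mul_I_le_exp_abs_im z))
    _ = Real.exp |z.im| := by ring

end Complex

lemma Real.summable_exp_mul_sub_mul_sq (a : ℝ) {b : ℝ} (hb : 0 < b) :
    Summable fun k : ℕ => Real.exp (a * k - b * k ^ 2) := by
  refine (Real.summable_exp_neg_nat.mul_left (Real.exp ((a + 1) ^ 2 / (4 * b)))).of_nonneg_of_le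
    (fun k => (Real.exp_pos _).le) fun k => ?_
  rw [← Real.exp_add, Real.exp_le_exp]
  -- completing the square: `(a + 1) k - b k² ≤ (a + 1)² / (4b)`
  have hsq : (a + 1) ^ 2 / (4 * b) * (4 * b) = (a + 1) ^ 2 := div_mul_cancel₀ _ (by positivity)
  nlinarith [sq_nonneg (2 * b * k - (a + 1))]

section RealRestriction

variable {G : ℂ → ℂ} {g : ℝ → ℝ}

lemma deriv_ofReal_eq_of_differentiable (hG : Differentiable ℂ G)
    (hgG : ∀ x : ℝ, (g x : ℂ) = G x) (x : ℝ) : ((deriv g x : ℝ) : ℂ) = deriv G x := by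
  have hG' : HasDerivAt (fun t : ℝ => (g t : ℂ)) (deriv G x) x := by
    simpa only [hgG] using (hG x).hasDerivAt.comp_ofReal
  have hg : HasDerivAt g (deriv G x).re x := by
    simpa only [← hgG, ofReal_re] using (hG x).hasDerivAt.real_of_complex
  rw [hg.deriv]
  exact hg.ofReal_comp.unique hG'

lemma iteratedDeriv_ofReal_eq_of_differentiable (hG : Differentiable ℂ G)
    (hgG : ∀ x : ℝ, (g x : ℂ) = G x) (n : ℕ) (x : ℝ) :
    ((iteratedDeriv n g x : ℝ) : ℂ) = iteratedDeriv n G x := by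
  induction n generalizing x with
  | zero => simpa using hgG x
  | succ n ih =>
    rw [iteratedDeriv_succ, iteratedDeriv_succ]
    exact deriv_ofReal_eq_of_differentiable
      ((hG.contDiff (n := ⊤)).differentiable_iteratedDeriv n (WithTop.coe_lt_top _)) ih x

lemma abs_iteratedDeriv_le_factorial_mul_of_norm_le_on_strip {C : ℝ} (hG : Differentiable ℂ G)
    (hgG : ∀ x : ℝ, (g x : ℂ) = G x) (hC : ∀ z : ℂ, |z.im| ≤ 1 → ‖G z‖ ≤ C) (n : ℕ) (x : ℝ) :
    |iteratedDeriv n g x| ≤ n.factorial * C := by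
  have hsphere : ∀ z ∈ Metric.sphere (x : ℂ) 1, ‖G z‖ ≤ C := by
    intro z hz
    refine hC z ?_
    simpa [← mem_sphere_iff_norm.1 hz] using abs_im_le_norm (z - x)
  simpa [← iteratedDeriv_ofReal_eq_of_differentiable hG hgG] using
    norm_iteratedDeriv_le_of_forall_mem_sphere_norm_le n one_pos hG.diffContOnCl hsphere

end RealRestriction

lemma abs_le_mul_exp_neg_of_tsum_sq_mul_exp_le {fc : ℤ → ℝ} {r M₀ : ℝ} (hM₀ : 0 ≤ M₀)
    (hsum : Summable fun k : ℤ => fc k ^ 2 * Real.exp (r * (k : ℝ) ^ 2))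
    (htsum : ∑' k : ℤ, fc k ^ 2 * Real.exp (r * (k : ℝ) ^ 2) ≤ M₀ ^ 2) (k : ℤ) :
    |fc k| ≤ M₀ * Real.exp (-(r / 2) * (k : ℝ) ^ 2) := by
  have hterm : (|fc k| * Real.exp (r / 2 * (k : ℝ) ^ 2)) ^ 2 ≤ M₀ ^ 2 := by
    calc (|fc k| * Real.exp (r / 2 * (k : ℝ) ^ 2)) ^ 2
        = fc k ^ 2 * Real.exp (r * (k : ℝ) ^ 2) := by
          rw [mul_pow, sq_abs, ← Real.exp_nat_mul]; ring_nf
      _ ≤ M₀ ^ 2 := (hsum.le_tsum k fun j _ => by positivity).trans htsum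
  have h := (pow_le_pow_iff_left₀ (by positivity) hM₀ two_ne_zero).1 hterm
  rwa [neg_mul, Real.exp_neg, ← div_eq_mul_inv, le_div_iff₀ (Real.exp_pos _)]

noncomputable def complexTrigTerm (fc : ℤ → ℝ) (k : ℕ) (z : ℂ) : ℂ :=
  fc ((k : ℤ) + 1) * cos (((k : ℂ) + 1) * z) + fc (-((k : ℤ) + 1)) * sin (((k : ℂ) + 1) * z)

noncomputable def complexTrigSeries (fc : ℤ → ℝ) (z : ℂ) : ℂ :=
  (fc 0 / Real.sqrt (2 * Real.pi) : ℝ) +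
    (1 / Real.sqrt Real.pi : ℝ) * ∑' k : ℕ, complexTrigTerm fc k z

lemma complexTrigSeries_ofReal (fc : ℤ → ℝ) (x : ℝ) :
    complexTrigSeries fc x = trigSeries fc x := by
  simp only [complexTrigSeries, complexTrigTerm, trigSeries]
  push_cast
  rfl

noncomputable def harmonicBound (A b s : ℝ) (k : ℕ) : ℝ :=
  2 * A * Real.exp (s * (k + 1) - b * (k + 1) ^ 2)

noncomputable def stripBound (A b s : ℝ) : ℝ :=
  A / Real.sqrt (2 * Real.pi) + 1 / Real.sqrt Real.pi * ∑' k : ℕ, harmonicBound A b s k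

lemma stripBound_nonneg {A : ℝ} (hA : 0 ≤ A) (b s : ℝ) : 0 ≤ stripBound A b s := by
  have : 0 ≤ ∑' k : ℕ, harmonicBound A b s k :=
    tsum_nonneg fun k => by unfold harmonicBound; positivity
  unfold stripBound
  positivity

lemma summable_harmonicBound (A : ℝ) {b : ℝ} (hb : 0 < b) (s : ℝ) :
    Summable (harmonicBound A b s) := by
  have h := (summable_nat_add_iff 1).2 (Real.summable_exp_mul_sub_mul_sq s hb)
  refine (h.mul_left (2 * A)).congr fun k => ?_
  simp [harmonicBound]

section Bounds

variable {fc : ℤ → ℝ} {A b : ℝ} (hcoef : ∀ k : ℤ, |fc k| ≤ A * Real.exp (-b * (k : ℝ) ^ 2))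
include hcoef

lemma norm_complexTrigTerm_le {s : ℝ} {z : ℂ} (hz : |z.im| ≤ s) (k : ℕ) :
    ‖complexTrigTerm fc k z‖ ≤ harmonicBound A b s k := by
  have hk : (0 : ℝ) ≤ k + 1 := by positivity
  have him : |(((k : ℂ) + 1) * z).im| ≤ s * (k + 1) := by
    have : (((k : ℂ) + 1) * z).im = (k + 1) * z.im := by simp
    rw [this, abs_mul, abs_of_nonneg hk, mul_comm]
    exact mul_le_mul_of_nonneg_right hz hk
  have hcos := (norm_cos_le_exp_abs_im _).trans (Real.exp_le_exp.2 him)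
  have hsin := (norm_sin_le_exp_abs_im _).trans (Real.exp_le_exp.2 him)
  have hpos : |fc ((k : ℤ) + 1)| ≤ A * Real.exp (-b * ((k : ℝ) + 1) ^ 2) := by
    simpa using hcoef ((k : ℤ) + 1)
  have hneg : |fc (-((k : ℤ) + 1))| ≤ A * Real.exp (-b * ((k : ℝ) + 1) ^ 2) := by
    have h := hcoef (-((k : ℤ) + 1))
    rwa [Int.cast_neg, neg_sq, Int.cast_add, Int.cast_natCast, Int.cast_one] at h
  calc ‖complexTrigTerm fc k z‖
      ≤ |fc ((k : ℤ) + 1)| * Real.exp (s * (k + 1)) +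
          |fc (-((k : ℤ) + 1))| * Real.exp (s * (k + 1)) := by
        refine (norm_add_le _ _).trans ?_
        rw [norm_mul, norm_mul, norm_real, norm_real, Real.norm_eq_abs, Real.norm_eq_abs]
        gcongr
    _ ≤ A * Real.exp (-b * ((k : ℝ) + 1) ^ 2) * Real.exp (s * (k + 1)) +
          A * Real.exp (-b * ((k : ℝ) + 1) ^ 2) * Real.exp (s * (k + 1)) := by
        gcongr
    _ = harmonicBound A b s k := by
        rw [harmonicBound, sub_eq_add_neg, Real.exp_add, neg_mul_eq_neg_mul]
        ring

lemma differentiable_complexTrigSeries (hb : 0 < b) : Differentiable ℂ (complexTrigSeries fc) := by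
  intro z
  set U : Set ℂ := {w | |w.im| < |z.im| + 1}
  have hU : IsOpen U := isOpen_lt (continuous_abs.comp continuous_im) continuous_const
  have hseries : DifferentiableOn ℂ (fun w => ∑' k, complexTrigTerm fc k w) U :=
    differentiableOn_tsum_of_summable_norm (summable_harmonicBound A hb _)
      (fun k => Differentiable.differentiableOn (by unfold complexTrigTerm; fun_prop)) hU
      (fun k _ hw => norm_complexTrigTerm_le hcoef hw.le k)
  have hz : z ∈ U := by simp [U]
  exact ((hseries.differentiableAt (hU.mem_nhds hz)).const_mul _).const_add _

lemma norm_complexTrigSeries_le (hb : 0 < b) {s : ℝ} {z : ℂ} (hz : |z.im| ≤ s) :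
    ‖complexTrigSeries fc z‖ ≤ stripBound A b s := by
  have hseries : ‖∑' k, complexTrigTerm fc k z‖ ≤ ∑' k, harmonicBound A b s k :=
    tsum_of_norm_bounded (summable_harmonicBound A hb s).hasSum (norm_complexTrigTerm_le hcoef hz)
  have h0 : |fc 0| ≤ A := by simpa using hcoef 0
  calc ‖complexTrigSeries fc z‖
      ≤ |fc 0| / Real.sqrt (2 * Real.pi) +
          1 / Real.sqrt Real.pi * ‖∑' k, complexTrigTerm fc k z‖ := by
        refine (norm_add_le _ _).trans ?_
        rw [norm_mul, norm_real, norm_real, Real.norm_eq_abs, Real.norm_eq_abs, abs_div,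
          abs_of_nonneg (Real.sqrt_nonneg _),
          abs_of_nonneg (by positivity : (0 : ℝ) ≤ 1 / Real.sqrt Real.pi)]
    _ ≤ stripBound A b s := by
        unfold stripBound
        gcongr

end Bounds

/-- Lemma C.1(iii) in the real trigonometric basis: there is `M = M(r, M₀) > 0` such that
every `f` in the `M₀`-ball of `A_r` (i.e. `∑ f_k² e^{rk²} ≤ M₀²`) is smooth, bounded by `M`,
and the derivatives of `e^f` satisfy `|∂ⁿ e^f| ≤ M · n! · Mⁿ`; that is, `f ∈ R₂(M)`. -/
theorem stmt_12 (r M₀ : ℝ) (hr : 0 < r) (hM₀ : 0 < M₀) :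
    ∃ M : ℝ, 0 < M ∧
      ∀ fc : ℤ → ℝ,
        Summable (fun k : ℤ => (fc k) ^ 2 * Real.exp (r * (k : ℝ) ^ 2)) →
        (∑' k : ℤ, (fc k) ^ 2 * Real.exp (r * (k : ℝ) ^ 2)) ≤ M₀ ^ 2 →
        ContDiff ℝ (⊤ : ℕ∞) (trigSeries fc) ∧
        (∀ x : ℝ, |trigSeries fc x| ≤ M) ∧
        ∀ (n : ℕ) (x : ℝ),
          |iteratedDeriv n (fun y : ℝ => Real.exp (trigSeries fc y)) x| ≤
            M * n.factorial * M ^ n := by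
  set B := stripBound M₀ (r / 2) 1
  have hB : 0 ≤ B := stripBound_nonneg hM₀.le _ _
  have hM : 1 ≤ B + Real.exp B := by linarith [Real.add_one_le_exp B]
  refine ⟨B + Real.exp B, by linarith, fun fc hsum htsum => ?_⟩
  have hcoef := abs_le_mul_exp_neg_of_tsum_sq_mul_exp_le hM₀.le hsum htsum
  have hF := differentiable_complexTrigSeries hcoef (half_pos hr)
  have hFB (z : ℂ) (hz : |z.im| ≤ 1) : ‖complexTrigSeries fc z‖ ≤ B :=
    norm_complexTrigSeries_le hcoef (half_pos hr) hz
  have hreal (x : ℝ) : ((trigSeries fc x : ℝ) : ℂ) = complexTrigSeries fc x :=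
    (complexTrigSeries_ofReal fc x).symm
  refine ⟨?_, fun x => ?_, fun n x => ?_⟩
  · have : trigSeries fc = fun x : ℝ => (complexTrigSeries fc x).re :=
      funext fun x => by rw [← hreal, ofReal_re]
    rw [this]
    exact hF.contDiff.real_of_complex
  · have := hFB x (by simp)
    rw [← hreal, norm_real, Real.norm_eq_abs] at this
    linarith [Real.exp_pos B]
  · have hexpB (z : ℂ) (hz : |z.im| ≤ 1) : ‖exp (complexTrigSeries fc z)‖ ≤ Real.exp B := by
      rw [norm_exp]
      exact Real.exp_le_exp.2 ((re_le_norm _).trans (hFB z hz))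
    calc |iteratedDeriv n (fun y : ℝ => Real.exp (trigSeries fc y)) x|
        ≤ n.factorial * Real.exp B :=
          abs_iteratedDeriv_le_factorial_mul_of_norm_le_on_strip hF.cexp
            (fun y => by rw [ofReal_exp, hreal]) hexpB n x
      _ = Real.exp B * n.factorial * 1 := by ring
      _ ≤ (B + Real.exp B) * n.factorial * (B + Real.exp B) ^ n := by
          gcongr
          · linarith
          · exact one_le_pow₀ hM
end

section
/- Let r > 0 and M₀ > 0, and let c : ℤ → ℂ satisfy |c_k| ≤ M₀ e^{-(r/2)|k|} for all k ∈ ℤ. Then the function f : ℝ → ℂ, f(x) = Σ_{k∈ℤ} c_k e^{ikx}, is well defined (the series converges absolutely) and smooth on ℝ, and for every n ∈ ℕ and every x ∈ ℝ one has |f^{(n)}(x)| ≤ M₁ · n! · (4/r)^n, where M₁ = M₀ (1 + e^{-r/4})/(1 − e^{-r/4}). -/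
/-!
Differentiate the series term by term. The `n`-th derivative of `c_k e^{ikx}` has norm
`|k|ⁿ ‖c_k‖ ≤ M₀ |k|ⁿ e^{-r|k|/2}`, and `tⁿ/n! ≤ e^t` at `t = r|k|/4` gives
`|k|ⁿ e^{-r|k|/4} ≤ n! (4/r)ⁿ`. What is left is `M₀ n! (4/r)ⁿ e^{-r|k|/4}`: a bound uniform in `x`
and summable in `k`, with sum `M₀ n! (4/r)ⁿ (1 + e^{-r/4})/(1 - e^{-r/4})` (two geometric series).
-/

open Complex Nat

theorem norm_iteratedFDeriv_tsum_le {α 𝕜 E F : Type*} [RCLike 𝕜] [NormedAddCommGroup E]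
    [NormedSpace 𝕜 E] [NormedAddCommGroup F] [CompleteSpace F] [NormedSpace 𝕜 F]
    {N : ℕ∞} {f : α → E → F} {v : ℕ → α → ℝ} (hf : ∀ i, ContDiff 𝕜 N (f i))
    (hv : ∀ k : ℕ, (k : ℕ∞) ≤ N → Summable (v k))
    (h'f : ∀ (k : ℕ) (i : α) (x : E), (k : ℕ∞) ≤ N → ‖iteratedFDeriv 𝕜 k (f i) x‖ ≤ v k i)
    {k : ℕ} (hk : (k : ℕ∞) ≤ N) (x : E) :
    ‖iteratedFDeriv 𝕜 k (fun y => ∑' i, f i y) x‖ ≤ ∑' i, v k i := by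
  rw [iteratedFDeriv_tsum_apply hf hv h'f hk]
  exact tsum_of_norm_bounded (hv k hk).hasSum fun i => h'f k i x hk

theorem hasSum_int_pow_natAbs {q : ℝ} (hq₀ : 0 ≤ q) (hq₁ : q < 1) :
    HasSum (fun k : ℤ => q ^ k.natAbs) ((1 + q) / (1 - q)) := by
  have hgeom : HasSum (fun n : ℕ => q ^ n) (1 - q)⁻¹ := hasSum_geometric_of_lt_one hq₀ hq₁
  have hsum := HasSum.of_nat_of_neg (f := fun k : ℤ => q ^ k.natAbs) hgeom
    (by simpa only [Int.natAbs_neg, Int.natAbs_natCast] using hgeom)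
  rwa [Int.natAbs_zero, pow_zero, show (1 - q)⁻¹ + (1 - q)⁻¹ - 1 = (1 + q) / (1 - q) by
    field_simp [(sub_pos.2 hq₁).ne']; ring] at hsum

theorem hasSum_int_exp_neg_mul_abs {s : ℝ} (hs : 0 < s) :
    HasSum (fun k : ℤ => Real.exp (-s * |(k : ℝ)|))
      ((1 + Real.exp (-s)) / (1 - Real.exp (-s))) := by
  convert hasSum_int_pow_natAbs (Real.exp_pos (-s)).le (Real.exp_lt_one_iff.2 (neg_neg_of_pos hs))
    using 2 with k
  rw [← Real.exp_nat_mul, Nat.cast_natAbs, Int.cast_abs]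
  ring_nf

theorem iteratedDeriv_cexp_mul_ofReal (a : ℂ) (n : ℕ) :
    iteratedDeriv n (fun x : ℝ => cexp (a * x)) = fun x : ℝ => a ^ n * cexp (a * x) := by
  induction n with
  | zero => simp
  | succ n ih =>
    ext x
    have hderiv :
        HasDerivAt (fun y : ℂ => a ^ n * cexp (a * y)) (a ^ (n + 1) * cexp (a * x)) x := by
      refine (((hasDerivAt_id (x : ℂ)).const_mul a).cexp.const_mul (a ^ n)).congr_deriv ?_
      rw [id, mul_one, pow_succ]
      ring
    rw [iteratedDeriv_succ, ih, hderiv.comp_ofReal.deriv]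

theorem pow_mul_exp_neg_le {r t : ℝ} (hr : 0 < r) (ht : 0 ≤ t) (n : ℕ) :
    t ^ n * Real.exp (-(r / 2) * t) ≤ n ! * (4 / r) ^ n * Real.exp (-(r / 4) * t) := by
  have hpow : ((r / 4) * t) ^ n ≤ n ! * Real.exp ((r / 4) * t) := by
    have := Real.pow_div_factorial_le_exp ((r / 4) * t) (by positivity) n
    rw [div_le_iff₀ (by positivity)] at this
    exact this.trans_eq (mul_comm _ _)
  calc t ^ n * Real.exp (-(r / 2) * t)
      = ((r / 4) * t) ^ n * (4 / r) ^ n * Real.exp (-(r / 2) * t) := by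
        rw [← mul_pow]; field_simp
    _ ≤ n ! * Real.exp ((r / 4) * t) * (4 / r) ^ n * Real.exp (-(r / 2) * t) := by gcongr
    _ = n ! * (4 / r) ^ n * Real.exp ((r / 4) * t + -(r / 2) * t) := by
        rw [Real.exp_add]; ring
    _ = n ! * (4 / r) ^ n * Real.exp (-(r / 4) * t) := by ring_nf

theorem norm_iteratedFDeriv_const_mul_cexp_I_mul_le {r M₀ ξ : ℝ} {c : ℂ} (hr : 0 < r)
    (hc : ‖c‖ ≤ M₀ * Real.exp (-(r / 2) * |ξ|)) (n : ℕ) (x : ℝ) :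
    ‖iteratedFDeriv ℝ n (fun x : ℝ => c * cexp (I * ξ * x)) x‖ ≤
      M₀ * n ! * (4 / r) ^ n * Real.exp (-(r / 4) * |ξ|) := by
  have hM₀ : 0 ≤ M₀ :=
    nonneg_of_mul_nonneg_left ((norm_nonneg c).trans hc) (Real.exp_pos _)
  have hunit : ‖cexp (I * ξ * x)‖ = 1 := by
    rw [mul_assoc, ← ofReal_mul]
    exact norm_exp_I_mul_ofReal _
  rw [norm_iteratedFDeriv_eq_norm_iteratedDeriv, iteratedDeriv_const_mul_field,
    iteratedDeriv_cexp_mul_ofReal, norm_mul, norm_mul, norm_pow, hunit, mul_one, norm_mul,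
    norm_I, one_mul, norm_real, Real.norm_eq_abs]
  calc ‖c‖ * |ξ| ^ n
      ≤ M₀ * Real.exp (-(r / 2) * |ξ|) * |ξ| ^ n := by gcongr
    _ = M₀ * (|ξ| ^ n * Real.exp (-(r / 2) * |ξ|)) := by ring
    _ ≤ M₀ * (n ! * (4 / r) ^ n * Real.exp (-(r / 4) * |ξ|)) :=
        mul_le_mul_of_nonneg_left (pow_mul_exp_neg_le hr (abs_nonneg ξ) n) hM₀
    _ = M₀ * n ! * (4 / r) ^ n * Real.exp (-(r / 4) * |ξ|) := by ring

theorem contDiff_const_mul_cexp_I_mul (c : ℂ) (ξ : ℝ) :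
    ContDiff ℝ (⊤ : ℕ∞) (fun x : ℝ => c * cexp (I * ξ * x)) :=
  contDiff_const.mul (contDiff_const.mul ofRealCLM.contDiff).cexp

theorem stmt_13_general (r M₀ : ℝ) (hr : 0 < r) (c : ℤ → ℂ)
    (hc : ∀ k : ℤ, ‖c k‖ ≤ M₀ * Real.exp (-(r / 2) * |(k : ℝ)|)) :
    (∀ x : ℝ, Summable (fun k : ℤ => ‖c k * Complex.exp (Complex.I * (k : ℂ) * (x : ℂ))‖)) ∧
    ContDiff ℝ (⊤ : ℕ∞)
      (fun x : ℝ => ∑' k : ℤ, c k * Complex.exp (Complex.I * (k : ℂ) * (x : ℂ))) ∧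
    ∀ (n : ℕ) (x : ℝ),
      ‖iteratedDeriv n
          (fun x : ℝ => ∑' k : ℤ, c k * Complex.exp (Complex.I * (k : ℂ) * (x : ℂ))) x‖ ≤
        (M₀ * (1 + Real.exp (-(r / 4))) / (1 - Real.exp (-(r / 4)))) *
          n.factorial * (4 / r) ^ n := by
  set f : ℤ → ℝ → ℂ := fun k x => c k * cexp (I * k * x)
  set v : ℕ → ℤ → ℝ := fun n k => M₀ * n ! * (4 / r) ^ n * Real.exp (-(r / 4) * |(k : ℝ)|)
  have hf (k : ℤ) : ContDiff ℝ (⊤ : ℕ∞) (f k) := by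
    have := contDiff_const_mul_cexp_I_mul (c k) k
    rwa [ofReal_intCast] at this
  have hfv (n : ℕ) (k : ℤ) (x : ℝ) : ‖iteratedFDeriv ℝ n (f k) x‖ ≤ v n k := by
    have := norm_iteratedFDeriv_const_mul_cexp_I_mul_le hr (hc k) n x
    rwa [ofReal_intCast] at this
  have hv (n : ℕ) : HasSum (v n)
      (M₀ * n ! * (4 / r) ^ n * ((1 + Real.exp (-(r / 4))) / (1 - Real.exp (-(r / 4))))) :=
    (hasSum_int_exp_neg_mul_abs (by positivity)).mul_left _
  refine ⟨fun x => ?_, contDiff_tsum hf (fun n _ => (hv n).summable) (fun n k x _ => hfv n k x),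
    fun n x => ?_⟩
  · refine (hv 0).summable.of_nonneg_of_le (fun k => norm_nonneg _) fun k => ?_
    rw [← norm_iteratedFDeriv_zero (𝕜 := ℝ) (f := f k)]
    exact hfv 0 k x
  · rw [← norm_iteratedFDeriv_eq_norm_iteratedDeriv]
    calc ‖iteratedFDeriv ℝ n (fun x => ∑' k, f k x) x‖
        ≤ ∑' k, v n k := norm_iteratedFDeriv_tsum_le hf (fun n _ => (hv n).summable)
          (fun n k x _ => hfv n k x) le_top x
      _ = _ := by rw [(hv n).tsum_eq]; ring

/-- Lemma C.1(i)+(ii) in one dimension: if `‖c_k‖ ≤ M₀ e^{-(r/2)|k|}`, then the 2π-periodic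
function `f(x) = ∑_{k∈ℤ} c_k e^{ikx}` is well defined (absolutely convergent series), smooth
on `ℝ`, and satisfies `‖f⁽ⁿ⁾(x)‖ ≤ M₁ · n! · (4/r)ⁿ` with
`M₁ = M₀ (1+e^{-r/4})/(1-e^{-r/4})`. -/
theorem stmt_13 (r M₀ : ℝ) (hr : 0 < r) (hM₀ : 0 < M₀) (c : ℤ → ℂ)
    (hc : ∀ k : ℤ, ‖c k‖ ≤ M₀ * Real.exp (-(r / 2) * |(k : ℝ)|)) :
    (∀ x : ℝ, Summable (fun k : ℤ => ‖c k * Complex.exp (Complex.I * (k : ℂ) * (x : ℂ))‖)) ∧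
    ContDiff ℝ (⊤ : ℕ∞)
      (fun x : ℝ => ∑' k : ℤ, c k * Complex.exp (Complex.I * (k : ℂ) * (x : ℂ))) ∧
    ∀ (n : ℕ) (x : ℝ),
      ‖iteratedDeriv n
          (fun x : ℝ => ∑' k : ℤ, c k * Complex.exp (Complex.I * (k : ℂ) * (x : ℂ))) x‖ ≤
        (M₀ * (1 + Real.exp (-(r / 4))) / (1 - Real.exp (-(r / 4)))) *
          n.factorial * (4 / r) ^ n :=
  stmt_13_general r M₀ hr c hc
end

section
/- Let r > 0. Consider the class B_r of functions f : [0,1] → ℝ of the form f(x) = f₀/√(2π) + (1/√π) Σ_{k≥1} ( f_k cos(kx) + f_{-k} sin(kx) ) with real coefficients satisfying Σ_{k∈ℤ} f_k² e^{r k²} ≤ 1. Then there exist a constant C > 0 and ρ₀ ∈ (0,1), depending only on r, such that for every ρ ∈ (0,ρ₀) there is a finite set T of functions from [0,1] to ℝ with cardinality at most exp(C (log(1/ρ))²) such that every f ∈ B_r satisfies sup_{x∈[0,1]} |f(x) − g(x)| ≤ ρ for some g ∈ T. -/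
/-!
The constraint `∑ f_k² e^{rk²} ≤ 1` forces `|f_k| ≤ q^|k|` with `q = e^{-r/2} < 1`, so the
series is uniformly within `ρ/2` of its trigonometric polynomial of degree `K`, with
`K = O(log (1/ρ))` chosen so that the geometric tail `2 q^{K+1} / (1 - q)` is small. Rounding
the `2K + 1` remaining coefficients, all in `[-1, 1]`, to the grid `δℤ` with `δ ≍ ρ / K` costs
another `ρ/2`, and leaves `(O(K/ρ))^{2K+1} = exp (O(log² (1/ρ)))` polynomials.
-/

open Real Finset

lemma one_le_sqrt_pi : 1 ≤ √π :=
  one_le_sqrt.mpr (by linarith [pi_gt_three])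

lemma one_le_sqrt_two_mul_pi : 1 ≤ √(2 * π) :=
  one_le_sqrt.mpr (by linarith [pi_gt_three])

namespace TrigSeries

noncomputable def term (fc : ℤ → ℝ) (x : ℝ) (k : ℕ) : ℝ :=
  fc ((k : ℤ) + 1) * cos (((k : ℝ) + 1) * x) + fc (-((k : ℤ) + 1)) * sin (((k : ℝ) + 1) * x)

noncomputable def trigPoly (K : ℕ) (fc : ℤ → ℝ) (x : ℝ) : ℝ :=
  fc 0 / √(2 * π) + (1 / √π) * ∑ k ∈ range K, term fc x k

lemma trigSeries_eq (fc : ℤ → ℝ) (x : ℝ) :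
    trigSeries fc x = fc 0 / √(2 * π) + (1 / √π) * ∑' k, term fc x k := rfl

lemma term_sub (a b : ℤ → ℝ) (x : ℝ) (k : ℕ) :
    term (a - b) x k = term a x k - term b x k := by
  simp only [term, Pi.sub_apply]; ring

lemma trigPoly_sub (K : ℕ) (a b : ℤ → ℝ) (x : ℝ) :
    trigPoly K (a - b) x = trigPoly K a x - trigPoly K b x := by
  simp only [trigPoly, term_sub, sum_sub_distrib, Pi.sub_apply]; ring

lemma abs_term_le (fc : ℤ → ℝ) (x : ℝ) (k : ℕ) :
    |term fc x k| ≤ |fc ((k : ℤ) + 1)| + |fc (-((k : ℤ) + 1))| := by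
  refine (abs_add_le _ _).trans ?_
  rw [abs_mul, abs_mul]
  gcongr
  · exact mul_le_of_le_one_right (abs_nonneg _) (abs_cos_le_one _)
  · exact mul_le_of_le_one_right (abs_nonneg _) (abs_sin_le_one _)

lemma abs_trigPoly_le {K : ℕ} {c : ℤ → ℝ} {δ : ℝ} (hc : ∀ m ∈ Icc (-(K : ℤ)) K, |c m| ≤ δ)
    (x : ℝ) : |trigPoly K c x| ≤ (2 * K + 1) * δ := by
  have hδ : 0 ≤ δ := (abs_nonneg _).trans (hc 0 (by simp))
  have hsum : |∑ k ∈ range K, term c x k| ≤ K * (2 * δ) := by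
    refine (abs_sum_le_sum_abs _ _).trans ?_
    refine (sum_le_card_nsmul _ _ (2 * δ) fun k hk => ?_).trans (by simp)
    have hk : k < K := mem_range.mp hk
    refine (abs_term_le c x k).trans ?_
    linarith [hc ((k : ℤ) + 1) (by simp; omega), hc (-((k : ℤ) + 1)) (by simp; omega)]
  have h0 := hc 0 (by simp)
  have hπ := one_le_sqrt_pi
  have h2π := one_le_sqrt_two_mul_pi
  rw [trigPoly]
  calc _ ≤ |c 0 / √(2 * π)| + |(1 / √π) * ∑ k ∈ range K, term c x k| := abs_add_le _ _
    _ ≤ |c 0| + |∑ k ∈ range K, term c x k| := by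
      rw [abs_div, abs_mul, abs_of_pos (by positivity : 0 < √(2 * π)),
        abs_of_pos (by positivity : 0 < 1 / √π)]
      gcongr
      · exact div_le_self (abs_nonneg _) h2π
      · exact mul_le_of_le_one_left (abs_nonneg _) ((div_le_one (by positivity)).mpr hπ)
    _ ≤ (2 * K + 1) * δ := by linarith

lemma abs_term_le_geometric {q : ℝ} {fc : ℤ → ℝ} (hc : ∀ m, |fc m| ≤ q ^ m.natAbs)
    (x : ℝ) (k : ℕ) : |term fc x k| ≤ 2 * q ^ (k + 1) := by
  have hk : ((k : ℤ) + 1).natAbs = k + 1 := by omega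
  have h₁ := hc ((k : ℤ) + 1)
  have h₂ := hc (-((k : ℤ) + 1))
  rw [hk] at h₁
  rw [Int.natAbs_neg, hk] at h₂
  linarith [abs_term_le fc x k]

lemma abs_trigSeries_sub_trigPoly_le {q : ℝ} (hq₀ : 0 ≤ q) (hq₁ : q < 1) {fc : ℤ → ℝ}
    (hc : ∀ m, |fc m| ≤ q ^ m.natAbs) (K : ℕ) (x : ℝ) :
    |trigSeries fc x - trigPoly K fc x| ≤ 2 * q ^ (K + 1) / (1 - q) := by
  have hmaj : HasSum (fun k ↦ 2 * q ^ (K + 1) * q ^ k) (2 * q ^ (K + 1) / (1 - q)) :=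
    div_eq_mul_inv (2 * q ^ (K + 1)) _ ▸ (hasSum_geometric_of_lt_one hq₀ hq₁).mul_left _
  have hterm (k : ℕ) : |term fc x (k + K)| ≤ 2 * q ^ (K + 1) * q ^ k :=
    (abs_term_le_geometric hc x _).trans_eq (by ring)
  have htail : Summable fun k ↦ term fc x (k + K) :=
    .of_norm_bounded hmaj.summable hterm
  have hsplit : trigSeries fc x - trigPoly K fc x = (1 / √π) * ∑' k, term fc x (k + K) := by
    rw [trigSeries_eq, trigPoly, ← (summable_nat_add_iff K).mp htail |>.sum_add_tsum_nat_add K]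
    ring
  have hπ : 0 < 1 / √π ∧ 1 / √π ≤ 1 :=
    ⟨by positivity, (div_le_one (by positivity)).mpr one_le_sqrt_pi⟩
  rw [hsplit, abs_mul, abs_of_pos hπ.1]
  refine (mul_le_of_le_one_left (abs_nonneg _) hπ.2).trans ?_
  refine (norm_tsum_le_tsum_norm htail.norm).trans ?_
  exact (htail.abs.tsum_le_tsum hterm hmaj.summable).trans_eq hmaj.tsum_eq

end TrigSeries

lemma abs_sub_mul_floor_div_le {δ : ℝ} (hδ : 0 < δ) (t : ℝ) : |t - δ * ⌊t / δ⌋| ≤ δ := by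
  have h₀ := Int.sub_floor_div_mul_nonneg t hδ
  have h₁ := Int.sub_floor_div_mul_lt t hδ
  rw [abs_le]
  constructor <;> linarith

lemma floor_div_mem_Icc {δ M t : ℝ} (hδ : 0 < δ) (ht : |t| ≤ M) :
    ⌊t / δ⌋ ∈ Icc (-(⌈M / δ⌉₊ : ℤ)) ⌈M / δ⌉₊ := by
  have hM : |t / δ| ≤ ⌈M / δ⌉₊ := by
    rw [abs_div, abs_of_pos hδ]
    exact (div_le_div_of_nonneg_right ht hδ.le).trans (Nat.le_ceil _)
  rw [abs_le] at hM
  rw [mem_Icc, Int.le_floor, Int.floor_le_iff]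
  push_cast
  constructor <;> linarith

lemma exists_finset_cover_of_abs_le {ι : Type*} (I : Finset ι) {δ : ℝ} (hδ : 0 < δ) (M : ℝ) :
    ∃ S : Finset (ι → ℝ), S.card ≤ (2 * ⌈M / δ⌉₊ + 1) ^ I.card ∧
      ∀ c : ι → ℝ, (∀ i ∈ I, |c i| ≤ M) → ∃ s ∈ S, ∀ i ∈ I, |c i - s i| ≤ δ := by
  classical
  let grid (j : I → ℤ) (i : ι) : ℝ := if h : i ∈ I then δ * j ⟨i, h⟩ else 0
  let J := Fintype.piFinset fun _ : I ↦ Icc (-(⌈M / δ⌉₊ : ℤ)) ⌈M / δ⌉₊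
  refine ⟨J.image grid, card_image_le.trans_eq ?_, fun c hc ↦ ?_⟩
  · simp only [J, Fintype.card_piFinset, Int.card_Icc, prod_const, card_univ, Fintype.card_coe]
    congr 1
    omega
  · refine ⟨grid fun i ↦ ⌊c i / δ⌋, mem_image_of_mem _ ?_, fun i hi ↦ ?_⟩
    · exact Fintype.mem_piFinset.mpr fun i ↦ floor_div_mem_Icc hδ (hc i i.2)
    · simpa only [grid, dif_pos hi] using abs_sub_mul_floor_div_le hδ (c i)

lemma abs_le_pow_natAbs_of_tsum_le_one {r : ℝ} (hr : 0 ≤ r) {fc : ℤ → ℝ}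
    (hs : Summable fun k : ℤ ↦ fc k ^ 2 * exp (r * (k : ℝ) ^ 2))
    (h₁ : ∑' k : ℤ, fc k ^ 2 * exp (r * (k : ℝ) ^ 2) ≤ 1) (m : ℤ) :
    |fc m| ≤ exp (-(r / 2)) ^ m.natAbs := by
  have hm : fc m ^ 2 * exp (r * (m : ℝ) ^ 2) ≤ 1 :=
    (hs.le_tsum m fun _ _ ↦ by positivity).trans h₁
  have hm' : (m.natAbs : ℝ) ≤ (m : ℝ) ^ 2 := by
    rw [Nat.cast_natAbs]
    exact_mod_cast Int.natCast_natAbs m ▸ Int.natAbs_le_self_sq m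
  have hsq : (exp (-(r / 2)) ^ m.natAbs) ^ 2 = exp (-(r * m.natAbs)) := by
    rw [← exp_nat_mul, ← exp_nat_mul]
    ring_nf
  refine abs_le_of_sq_le_sq ?_ (by positivity)
  calc fc m ^ 2 ≤ exp (-(r * (m : ℝ) ^ 2)) := by
        rw [exp_neg, ← one_div, le_div_iff₀ (exp_pos _)]
        exact hm
    _ ≤ (exp (-(r / 2)) ^ m.natAbs) ^ 2 := by
        rw [hsq]
        gcongr

open TrigSeries in
lemma exists_finset_trigPoly_cover {q : ℝ} (hq₀ : 0 ≤ q) (hq₁ : q < 1) (K : ℕ) {δ : ℝ}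
    (hδ : 0 < δ) :
    ∃ T : Finset (ℝ → ℝ), T.card ≤ (2 * ⌈1 / δ⌉₊ + 1) ^ (2 * K + 1) ∧
      ∀ fc : ℤ → ℝ, (∀ m, |fc m| ≤ q ^ m.natAbs) →
        ∃ g ∈ T, ∀ x, |trigSeries fc x - g x| ≤ (2 * K + 1) * δ + 2 * q ^ (K + 1) / (1 - q) := by
  classical
  obtain ⟨S, hS, hcover⟩ := exists_finset_cover_of_abs_le (Icc (-(K : ℤ)) K) hδ 1
  have hI : (Icc (-(K : ℤ)) K).card = 2 * K + 1 := by rw [Int.card_Icc]; omega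
  refine ⟨S.image (trigPoly K), card_image_le.trans (hI ▸ hS), fun fc hc ↦ ?_⟩
  obtain ⟨s, hs, hfs⟩ := hcover fc fun m _ ↦ (hc m).trans (pow_le_one₀ hq₀ hq₁.le)
  refine ⟨trigPoly K s, mem_image_of_mem _ hs, fun x ↦ ?_⟩
  have hpoly : |trigPoly K fc x - trigPoly K s x| ≤ (2 * K + 1) * δ :=
    trigPoly_sub K fc s x ▸ abs_trigPoly_le hfs x
  have htail := abs_trigSeries_sub_trigPoly_le hq₀ hq₁ hc K x
  linarith [abs_sub_le (trigSeries fc x) (trigPoly K fc x) (trigPoly K s x)]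

lemma exists_two_mul_pow_div_le {q : ℝ} (hq₀ : 0 < q) (hq₁ : q < 1) {L : ℝ} (hL : 1 ≤ L) :
    ∃ K : ℕ, 2 * q ^ (K + 1) / (1 - q) ≤ exp (-L) / 2 ∧
      (2 * K + 1 : ℝ) ≤ (2 * (log (4 / (1 - q)) + 1) / -log q + 3) * L := by
  set s := -log q
  set c := log (4 / (1 - q))
  have hs : 0 < s := neg_pos.mpr (log_neg hq₀ hq₁)
  have hc : 0 < c := log_pos ((one_lt_div (by linarith)).mpr (by linarith))
  refine ⟨⌈(c + L) / s⌉₊, ?_, ?_⟩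
  · have hK : c + L ≤ s * (⌈(c + L) / s⌉₊ + 1) := by
      have := Nat.le_ceil ((c + L) / s)
      rw [div_le_iff₀ hs] at this
      nlinarith
    have hpow : q ^ (⌈(c + L) / s⌉₊ + 1) ≤ (1 - q) / 4 * exp (-L) := by
      calc q ^ (⌈(c + L) / s⌉₊ + 1) = exp (-(s * (⌈(c + L) / s⌉₊ + 1))) := by
            rw [← exp_log hq₀, ← exp_nat_mul, show s = -log q from rfl]
            push_cast
            ring_nf
        _ ≤ exp (-c + -L) := exp_le_exp.mpr (by linarith)
        _ = (1 - q) / 4 * exp (-L) := by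
            rw [exp_add, exp_neg, exp_log (by linarith [div_pos four_pos (sub_pos.mpr hq₁)]),
              inv_div]
    rw [div_le_iff₀ (sub_pos.mpr hq₁)]
    linarith
  · have hK := Nat.ceil_lt_add_one (div_pos (by linarith : 0 < c + L) hs).le
    have hcL : 2 * ((c + L) / s) ≤ 2 * (c + 1) / s * L := by
      rw [div_mul_eq_mul_div, mul_div_assoc', div_le_div_iff_of_pos_right hs]
      nlinarith
    linarith

lemma two_mul_ceil_add_one_le {u : ℝ} (hu : 1 ≤ u) : (2 * ⌈u⌉₊ + 1 : ℝ) ≤ 5 * u := by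
  linarith [Nat.ceil_lt_add_one (zero_le_one.trans hu)]

lemma pow_mul_exp_le_exp_sq {n : ℕ} {A L : ℝ} (hA : 0 ≤ A) (hL : 0 ≤ L) (hn : (n : ℝ) ≤ A * L) :
    (10 * n * exp L) ^ n ≤ exp (A * (10 * A + 1) * L ^ 2) := by
  have hbase : 10 * n * exp L ≤ exp (10 * n + L) := by
    rw [exp_add]
    gcongr
    linarith [add_one_le_exp (10 * n : ℝ)]
  calc (10 * n * exp L) ^ n ≤ exp (10 * n + L) ^ n := by gcongr
    _ = exp (n * (10 * n + L)) := (exp_nat_mul _ n).symm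
    _ ≤ exp (A * (10 * A + 1) * L ^ 2) := by
      refine exp_le_exp.mpr ?_
      calc (n : ℝ) * (10 * n + L) ≤ (A * L) * (10 * (A * L) + L) := by gcongr
        _ = A * (10 * A + 1) * L ^ 2 := by ring

lemma exists_truncation_and_mesh {q : ℝ} (hq₀ : 0 < q) (hq₁ : q < 1) :
    ∃ C > 0, ∀ ρ, 0 < ρ → ρ < exp (-1) → ∃ K : ℕ, ∃ δ > 0,
      (2 * K + 1) * δ + 2 * q ^ (K + 1) / (1 - q) ≤ ρ ∧
      ((2 * ⌈1 / δ⌉₊ + 1) ^ (2 * K + 1) : ℝ) ≤ exp (C * log (1 / ρ) ^ 2) := by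
  set A := 2 * (log (4 / (1 - q)) + 1) / -log q + 3
  have hA : 0 < A := by
    have : 0 < -log q := neg_pos.mpr (log_neg hq₀ hq₁)
    have : 0 < log (4 / (1 - q)) := log_pos ((one_lt_div (by linarith)).mpr (by linarith))
    positivity
  refine ⟨A * (10 * A + 1), by positivity, fun ρ hρ hρ₀ ↦ ?_⟩
  have hL : 1 ≤ log (1 / ρ) := by
    have := log_lt_log hρ hρ₀
    rw [log_exp] at this
    rw [one_div, log_inv]
    linarith
  set L := log (1 / ρ)
  have hexpL : exp L = 1 / ρ := exp_log (by positivity)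
  obtain ⟨K, htail, hK⟩ := exists_two_mul_pow_div_le hq₀ hq₁ hL
  have hn : (0 : ℝ) < 2 * K + 1 := by positivity
  refine ⟨K, ρ / (2 * (2 * K + 1)), by positivity, ?_, ?_⟩
  · have hmesh : (2 * K + 1) * (ρ / (2 * (2 * K + 1))) = ρ / 2 := by field_simp
    have hρL : exp (-L) = ρ := by rw [exp_neg, hexpL, one_div, inv_inv]
    rw [hmesh]
    linarith
  · have hinv : 1 / (ρ / (2 * (2 * K + 1))) = 2 * (2 * K + 1) * exp L := by
      rw [hexpL]; field_simp
    calc ((2 * ⌈1 / (ρ / (2 * (2 * K + 1)))⌉₊ + 1) ^ (2 * K + 1) : ℝ)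
        ≤ (5 * (1 / (ρ / (2 * (2 * K + 1))))) ^ (2 * K + 1) := by
          gcongr
          exact two_mul_ceil_add_one_le (by rw [hinv]; nlinarith [add_one_le_exp L])
      _ = (10 * ((2 * K + 1 : ℕ) : ℝ) * exp L) ^ (2 * K + 1) := by rw [hinv]; push_cast; ring
      _ ≤ exp (A * (10 * A + 1) * L ^ 2) :=
          pow_mul_exp_le_exp_sq hA.le (by linarith) (by push_cast; exact hK)

/-- Covering-number bound for the unit ball of the RKHS `A_r` of the squared exponential
prior, restricted to `[0,1]`: there are `C > 0` and `ρ₀ ∈ (0,1)` depending only on `r` such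
that for every `ρ ∈ (0,ρ₀)` there is a set of at most `exp(C (log(1/ρ))²)` functions that
ρ-covers, in the sup-norm on `[0,1]`, all series with coefficients `∑ f_k² e^{rk²} ≤ 1`. -/
theorem stmt_14 (r : ℝ) (hr : 0 < r) :
    ∃ C ρ₀ : ℝ, 0 < C ∧ 0 < ρ₀ ∧ ρ₀ < 1 ∧
      ∀ ρ : ℝ, 0 < ρ → ρ < ρ₀ →
        ∃ T : Finset (ℝ → ℝ),
          (T.card : ℝ) ≤ Real.exp (C * (Real.log (1 / ρ)) ^ 2) ∧
          ∀ fc : ℤ → ℝ,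
            Summable (fun k : ℤ => (fc k) ^ 2 * Real.exp (r * (k : ℝ) ^ 2)) →
            (∑' k : ℤ, (fc k) ^ 2 * Real.exp (r * (k : ℝ) ^ 2)) ≤ 1 →
            ∃ g ∈ T, ∀ x ∈ Set.Icc (0 : ℝ) 1, |trigSeries fc x - g x| ≤ ρ := by
  have hq₀ : 0 < exp (-(r / 2)) := exp_pos _
  have hq₁ : exp (-(r / 2)) < 1 := exp_lt_one_iff.mpr (by linarith)
  obtain ⟨C, hC, hparams⟩ := exists_truncation_and_mesh hq₀ hq₁
  refine ⟨C, exp (-1), hC, exp_pos _, exp_lt_one_iff.mpr (by norm_num), fun ρ hρ hρ₀ ↦ ?_⟩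
  obtain ⟨K, δ, hδ, herr, hcard⟩ := hparams ρ hρ hρ₀
  obtain ⟨T, hTcard, hT⟩ := exists_finset_trigPoly_cover hq₀.le hq₁ K hδ
  refine ⟨T, le_trans (by exact_mod_cast hTcard) hcard, fun fc hs h₁ ↦ ?_⟩
  obtain ⟨g, hg, hfg⟩ := hT fc (abs_le_pow_natAbs_of_tsum_le_one hr.le hs h₁)
  exact ⟨g, hg, fun x _ ↦ (hfg x).trans herr⟩
end
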